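/- In an undirected graph G with positive edge weights, suppose (h = v_0, ..., v_j, v_{j+1}, ..., v_g) is a prefix of a shortest h-to-h' path and u is a neighbor of v_j with len_G(v_j,u) ≤ len_G(v_j,v_{j+1}). Then dist_G(h,u) ≤ dist_G(h,v_g). Consequently, any neighbor w of v_g lying on a shortest v_g-to-h' path satisfies dist_G(h,w) > dist_G(h,v_g), hence w cannot equal such a previously-seen vertex u unless dist values coincide contradictorily. -/

import Mathlib

/-!
A walk that is a prefix of a shortest `h`-`h'` walk ending at `v_g` is itself a shortest
`h`-`v_g` walk, and `v_g` splits `dist(h,h')`. Replacing the step `v_j → v_{j+1}` by the step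
`v_j → u`, which is not longer, gives an `h`-`u` walk of length at most
`dist(h,v_{j+1}) ≤ dist(h,v_g)`. If `w` follows `v_g` on a shortest `v_g`-`h'` walk, then
`dist(h,v_g) + len(v_g,w) + dist(w,h') = dist(h,h') ≤ dist(h,w) + dist(w,h')`, and cancelling
the finite `dist(w,h')` leaves `dist(h,w) ≥ dist(h,v_g) + len(v_g,w) > dist(h,v_g)`.
-/

open scoped ENNReal Classical

variable {V : Type*}

/-- Length of a walk (list of vertices) given edge weights `len`
(`len u v = ∞` means the edge `(u,v)` is absent). -/
noncomputable def walkLen (len : V → V → ℝ≥0∞) : List V → ℝ≥0∞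
  | [] => 0
  | [_] => 0
  | u :: v :: rest => len u v + walkLen len (v :: rest)

/-- `p` is a walk starting at `s` and ending at `t`. -/
def IsWalkFromTo (s t : V) (p : List V) : Prop :=
  p.head? = some s ∧ p.getLast? = some t

/-- Shortest-path distance: infimum of lengths of walks from `s` to `t`. -/
noncomputable def gdist (len : V → V → ℝ≥0∞) (s t : V) : ℝ≥0∞ :=
  ⨅ (p : List V) (_ : IsWalkFromTo s t p), walkLen len p

/-- `p` is a prefix of some shortest `s`-`t` path. -/
def IsShortestPrefix (len : V → V → ℝ≥0∞) (s t : V) (p : List V) : Prop :=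
  ∃ r : List V, p <+: r ∧ IsWalkFromTo s t r ∧ walkLen len r = gdist len s t

section Walks

variable {len : V → V → ℝ≥0∞}

theorem walkLen_append_of_getLast? {p : List V} {b : V} (hp : p.getLast? = some b)
    (q : List V) : walkLen len (p ++ q) = walkLen len p + walkLen len (b :: q) := by
  match p, hp with
  | [x], hp =>
    obtain rfl : x = b := by simpa using hp
    simp [walkLen]
  | x :: y :: p', hp =>
    have ih := walkLen_append_of_getLast? (p := y :: p') (by simpa using hp) q
    simp only [List.cons_append, walkLen] at ih ⊢
    rw [ih, add_assoc]

theorem walkLen_concat {p : List V} {b : V} (hp : p.getLast? = some b) (u : V) :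
    walkLen len (p ++ [u]) = walkLen len p + len b u := by
  simp [walkLen_append_of_getLast? hp, walkLen]

theorem walkLen_le_of_isPrefix {p q : List V} (h : p <+: q) : walkLen len p ≤ walkLen len q := by
  obtain ⟨s, rfl⟩ := h
  cases hb : p.getLast? with
  | none => simp [List.getLast?_eq_none_iff.mp hb, walkLen]
  | some b => exact (walkLen_append_of_getLast? hb s).symm ▸ le_self_add

theorem IsWalkFromTo.append {a b c : V} {p q : List V} (hp : IsWalkFromTo a b p)
    (hq : IsWalkFromTo b c (b :: q)) : IsWalkFromTo a c (p ++ q) := by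
  obtain ⟨hp₁, hp₂⟩ := hp
  refine ⟨by simp [List.head?_append, hp₁], ?_⟩
  cases q with
  | nil => simpa [← Option.some_inj.mp hq.2] using hp₂
  | cons z q => simpa [List.getLast?_append] using hq.2

theorem IsWalkFromTo.take {s t : V} {p : List V} (hp : IsWalkFromTo s t p) {j : ℕ}
    (hj : j < p.length) : IsWalkFromTo s p[j] (p.take (j + 1)) :=
  ⟨by simp [List.head?_take, hp.1], by simp [List.getLast?_take, List.getElem?_eq_getElem hj]⟩

end Walks

section Distance

variable {len : V → V → ℝ≥0∞}

theorem gdist_le_walkLen {s t : V} {p : List V} (hp : IsWalkFromTo s t p) :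
    gdist len s t ≤ walkLen len p :=
  iInf₂_le p hp

theorem gdist_triangle (len : V → V → ℝ≥0∞) (a b c : V) :
    gdist len a c ≤ gdist len a b + gdist len b c :=
  ENNReal.le_iInf₂_add_iInf₂ fun p hp q hq => by
    obtain ⟨q', hq'⟩ : ∃ q', q = b :: q' := by
      cases q with
      | nil => simp [IsWalkFromTo] at hq
      | cons x q' => exact ⟨q', by simpa [IsWalkFromTo] using hq.1⟩
    subst hq'
    rw [← walkLen_append_of_getLast? hp.2]
    exact gdist_le_walkLen (hp.append hq)

theorem gdist_le_walkLen_of_concat_isPrefix {s b v u : V} {q p : List V}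
    (hq : IsWalkFromTo s b q) (hpre : q ++ [v] <+: p) (hle : len b u ≤ len b v) :
    gdist len s u ≤ walkLen len p :=
  calc gdist len s u ≤ walkLen len (q ++ [u]) := gdist_le_walkLen (hq.append ⟨rfl, rfl⟩)
    _ = walkLen len q + len b u := walkLen_concat hq.2 u
    _ ≤ walkLen len q + len b v := by gcongr
    _ = walkLen len (q ++ [v]) := (walkLen_concat hq.2 v).symm
    _ ≤ walkLen len p := walkLen_le_of_isPrefix hpre

theorem gdist_lt_of_next_on_geodesic {s v w t : V}
    (hsplit : gdist len s v + gdist len v t = gdist len s t) (hfin : gdist len s t ≠ ∞)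
    (hpos : 0 < len v w) (hw : len v w + gdist len w t = gdist len v t) :
    gdist len s v < gdist len s w := by
  rw [← hsplit, ← hw] at hfin
  obtain ⟨hsv, hwt⟩ : gdist len s v ≠ ∞ ∧ gdist len w t ≠ ∞ := by
    simp only [ne_eq, ENNReal.add_eq_top, not_or] at hfin
    exact ⟨hfin.1, hfin.2.2⟩
  have hstep : gdist len s v + len v w ≤ gdist len s w := by
    rw [← ENNReal.add_le_add_iff_right hwt, add_assoc, hw, hsplit]
    exact gdist_triangle len s w t
  exact (ENNReal.lt_add_right hsv hpos.ne').trans_le hstep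

end Distance

namespace IsShortestPrefix

variable {len : V → V → ℝ≥0∞} {s t v : V} {p : List V}

theorem isWalkFromTo (hp : IsShortestPrefix len s t p) (hlast : p.getLast? = some v) :
    IsWalkFromTo s v p := by
  obtain ⟨_, ⟨q, rfl⟩, ⟨hhead, _⟩, _⟩ := hp
  cases p with
  | nil => simp at hlast
  | cons x p' => exact ⟨by simpa using hhead, hlast⟩

theorem walkLen_eq_gdist_and_gdist_add (hp : IsShortestPrefix len s t p)
    (hlast : p.getLast? = some v) (hfin : gdist len s t ≠ ∞) :
    walkLen len p = gdist len s v ∧ gdist len s v + gdist len v t = gdist len s t := by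
  have hsv := gdist_le_walkLen (len := len) (hp.isWalkFromTo hlast)
  obtain ⟨_, ⟨q, rfl⟩, ⟨_, hend⟩, hlen⟩ := hp
  have hvt : gdist len v t ≤ walkLen len (v :: q) := by
    refine gdist_le_walkLen ⟨rfl, ?_⟩
    cases q with
    | nil => simpa [hlast] using hend
    | cons z q => simpa [List.getLast?_append] using hend
  rw [walkLen_append_of_getLast? hlast] at hlen
  have hqfin : walkLen len (v :: q) ≠ ∞ := by
    rw [← hlen] at hfin
    exact (ENNReal.add_ne_top.mp hfin).2
  have hle : walkLen len p + walkLen len (v :: q) ≤ gdist len s v + gdist len v t :=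
    hlen ▸ gdist_triangle len s v t
  have hpv : walkLen len p ≤ gdist len s v :=
    (ENNReal.add_le_add_iff_right hqfin).mp (hle.trans (by gcongr))
  refine ⟨hpv.antisymm hsv, le_antisymm ?_ (gdist_triangle len s v t)⟩
  exact hlen ▸ add_le_add hsv hvt

end IsShortestPrefix

/-- undirected scan invariant. If `p = (h = v_0, …, v_g)` is a
prefix of a shortest `h`-`h'` path and `u` is a neighbor of `v_j` scanned no
later than `v_{j+1}` (i.e. `len(v_j,u) ≤ len(v_j,v_{j+1})`), then
`dist(h,u) ≤ dist(h,v_g)`; moreover every neighbor `w` of `v_g` lying on a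
shortest `v_g`-`h'` path has `dist(h,w) > dist(h,v_g)`. -/
theorem stmt_10 (len : V → V → ℝ≥0∞)
    (hpos : ∀ u v, 0 < len u v)
    (h h' : V) (hfin : gdist len h h' ≠ ∞)
    (p : List V) (hp : IsShortestPrefix len h h' p)
    (vg : V) (hlast : p.getLast? = some vg)
    (j : ℕ) (hj : j + 1 < p.length) (u : V)
    (hle : len (p.get ⟨j, by omega⟩) u ≤
      len (p.get ⟨j, by omega⟩) (p.get ⟨j+1, hj⟩)) :
    gdist len h u ≤ gdist len h vg ∧
      ∀ w, len vg w ≠ ∞ → len vg w + gdist len w h' = gdist len vg h' →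
        gdist len h vg < gdist len h w := by
  obtain ⟨hshortest, hsplit⟩ := hp.walkLen_eq_gdist_and_gdist_add hlast hfin
  refine ⟨?_, fun w _ hw => gdist_lt_of_next_on_geodesic hsplit hfin (hpos vg w) hw⟩
  rw [← hshortest]
  refine gdist_le_walkLen_of_concat_isPrefix ((hp.isWalkFromTo hlast).take (by omega)) ?_ hle
  rw [List.get_eq_getElem, List.take_concat_get']
  exact List.take_prefix _ _
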